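/- arXiv:2005.07311 — 8 statements merged into one kernel-verified Lean document; each statement's English description precedes it below -/
import Mathlib

section
/- For n ≥ 4, the broadcast dimension of the path P_n equals ⌊(2n+2)/5⌋. -/
open SimpleGraph Finset

variable {V : Type*}

/-- truncated distance `d_k(x,y) = min(d(x,y), k+1)` with `d = ∞` across components. -/
noncomputable def truncDist (G : SimpleGraph V) (k : ℕ) (x y : V) : ℕ∞ :=
  min (G.edist x y) (k + 1)

/-- `f` is a resolving broadcast of `G`. -/
def IsResolvingBroadcast (G : SimpleGraph V) (f : V → ℕ) : Prop :=
  ∀ x y : V, x ≠ y → ∃ z : V, 0 < f z ∧ truncDist G (f z) x z ≠ truncDist G (f z) y z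

/-- broadcast dimension -/
noncomputable def bdim (G : SimpleGraph V) [Fintype V] : ℕ :=
  sInf {c : ℕ | ∃ f : V → ℕ, IsResolvingBroadcast G f ∧ ∑ v, f v = c}

/-- adjacency resolving set -/
def IsAdjResolvingSet (G : SimpleGraph V) (S : Set V) : Prop :=
  ∀ x y : V, x ≠ y → ∃ z ∈ S, truncDist G 1 x z ≠ truncDist G 1 y z

/-- adjacency dimension -/
noncomputable def adim (G : SimpleGraph V) [Fintype V] : ℕ :=
  sInf {n : ℕ | ∃ S : Finset V, IsAdjResolvingSet G ↑S ∧ S.card = n}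

/-- resolving set (metric dimension) -/
def IsResolvingSet (G : SimpleGraph V) (S : Set V) : Prop :=
  ∀ x y : V, x ≠ y → ∃ z ∈ S, G.edist x z ≠ G.edist y z

/-- metric dimension -/
noncomputable def mdim (G : SimpleGraph V) [Fintype V] : ℕ :=
  sInf {n : ℕ | ∃ S : Finset V, IsResolvingSet G ↑S ∧ S.card = n}

/-! Number the vertices `0, …, n - 1`. For the upper bound, let every vertex `≡ 1, 3 (mod 5)`
broadcast `1` (every vertex `≡ 0, 3 (mod 5)` if `n ≡ 3 (mod 5)`, as otherwise `n - 3` and `n - 1`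
are not separated): there are `⌊(2n + 2)/5⌋` such vertices.

For the lower bound, say `z` reaches `x` when `0 < f z` and `d(x, z) ≤ f z`, and let `μ x` count
the broadcasters reaching `x`. Two unreached vertices are not separated, so `μ x = 0` for at most
one `x`. A broadcaster `z` reaches at most `2 f z + 1` vertices. For each of the
`p z = min (f z) (min z (n - 1 - z))` distances `d` at which `z - d` and `z + d` are both reached
by `z`, some other broadcaster separates them and reaches one of them, so `z` reaches at least
`p z` vertices with `μ ≥ 2`. Counting incidences,
`2 (n - 1) + ∑ p ≤ 2 ∑ μ ≤ ∑ (5 f + p)`, that is, `2 n ≤ 5 ∑ f + 2`. -/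

namespace SimpleGraph

lemma pathGraph_edist_le_of_add_eq {n d : ℕ} {x y : Fin n} (h : x.val + d = y.val) :
    (pathGraph n).edist x y ≤ d := by
  induction d generalizing x with
  | zero => simp [Fin.ext (by omega : x.val = y.val)]
  | succ d ih =>
    let m : Fin n := ⟨x.val + 1, by omega⟩
    have hxm : (pathGraph n).Adj x m := pathGraph_adj.2 (Or.inl rfl)
    calc (pathGraph n).edist x y ≤ (pathGraph n).edist x m + (pathGraph n).edist m y :=
          SimpleGraph.edist_triangle
      _ ≤ 1 + d := add_le_add (edist_eq_one_iff_adj.2 hxm).le (ih (by simp only [m]; omega))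
      _ = (d + 1 : ℕ) := by push_cast; ring

lemma pathGraph_dist_val_le_length {n : ℕ} {x y : Fin n} (p : (pathGraph n).Walk x y) :
    x.val.dist y.val ≤ p.length := by
  induction p with
  | nil => simp
  | cons hadj _ ih =>
    rw [pathGraph_adj] at hadj
    rw [Walk.length_cons]
    simp only [Nat.dist] at *
    omega

lemma pathGraph_edist {n : ℕ} (x y : Fin n) :
    (pathGraph n).edist x y = x.val.dist y.val := by
  refine le_antisymm ?_ ?_
  · rcases le_total x.val y.val with h | h
    · rw [Nat.dist_eq_sub_of_le h]
      exact pathGraph_edist_le_of_add_eq (by omega)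
    · rw [Nat.dist_comm, Nat.dist_eq_sub_of_le h, edist_comm]
      exact pathGraph_edist_le_of_add_eq (by omega)
  · obtain ⟨p, hp⟩ := (pathGraph_preconnected n x y).exists_walk_length_eq_edist
    rw [← hp]
    exact_mod_cast pathGraph_dist_val_le_length p

end SimpleGraph

lemma truncDist_pathGraph {n : ℕ} (k : ℕ) (x z : Fin n) :
    truncDist (pathGraph n) k x z = (min (x.val.dist z.val) (k + 1) : ℕ) := by
  rw [truncDist, pathGraph_edist]
  norm_cast

/-- The resolving condition for `pathGraph n`, transported to positions in `ℕ`
(see `isResolvingBroadcast_pathGraph_iff`). -/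
def ResolvesPath (n : ℕ) (f : ℕ → ℕ) : Prop :=
  ∀ x < n, ∀ y < n, x ≠ y →
    ∃ z < n, 0 < f z ∧ min (x.dist z) (f z + 1) ≠ min (y.dist z) (f z + 1)

lemma isResolvingBroadcast_pathGraph_iff {n : ℕ} (f : ℕ → ℕ) :
    IsResolvingBroadcast (pathGraph n) (fun v => f v) ↔ ResolvesPath n f := by
  simp only [IsResolvingBroadcast, ResolvesPath, truncDist_pathGraph, Nat.cast_inj, ne_eq,
    Fin.forall_iff, Fin.exists_iff, Fin.ext_iff]
  grind

namespace ResolvesPath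

abbrev Reaches (f : ℕ → ℕ) (z x : ℕ) : Prop := 0 < f z ∧ x.dist z ≤ f z

def reachers (n : ℕ) (f : ℕ → ℕ) (x : ℕ) : Finset ℕ := {z ∈ range n | Reaches f z x}

def twoSidedReach (n : ℕ) (f : ℕ → ℕ) (z : ℕ) : ℕ := min (f z) (min z (n - 1 - z))

variable {n : ℕ} {f : ℕ → ℕ}

lemma reaches_or_reaches_of_ne {x y z : ℕ} (hz : 0 < f z)
    (h : min (x.dist z) (f z + 1) ≠ min (y.dist z) (f z + 1)) :
    Reaches f z x ∨ Reaches f z y := by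
  omega

lemma card_filter_reachers_eq_empty_le_one (hf : ResolvesPath n f) :
    #{x ∈ range n | reachers n f x = ∅} ≤ 1 := by
  refine Finset.card_le_one.2 fun x hx y hy => by_contra fun hxy => ?_
  simp only [Finset.mem_filter, Finset.mem_range, reachers, Finset.filter_eq_empty_iff] at hx hy
  obtain ⟨z, hzn, hz, hne⟩ := hf x hx.1 y hy.1 hxy
  rcases reaches_or_reaches_of_ne hz hne with h | h
  · exact hx.2 hzn h
  · exact hy.2 hzn h

lemma two_mul_card_reached_le (z : ℕ) :
    2 * #{x ∈ range n | Reaches f z x} ≤ 5 * f z + twoSidedReach n f z := by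
  rcases Nat.eq_zero_or_pos (f z) with hz | hz
  · simp [Reaches, twoSidedReach, hz]
  have hsub : {x ∈ range n | Reaches f z x} ⊆ Icc (z - f z) (min (z + f z) (n - 1)) := by
    intro x hx
    obtain ⟨hxn, -, hxz⟩ := Finset.mem_filter.1 hx
    simp only [Finset.mem_range, Nat.dist] at hxn hxz
    simp only [Finset.mem_Icc]
    omega
  have hcard := (Finset.card_le_card hsub).trans_eq (Nat.card_Icc _ _)
  unfold twoSidedReach
  omega

lemma exists_two_le_card_reachers (hf : ResolvesPath n f) {z d : ℕ} (hz : z < n) (hd : 0 < d)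
    (hdz : d ≤ twoSidedReach n f z) :
    ∃ w < n, w.dist z = d ∧ Reaches f z w ∧ 2 ≤ #(reachers n f w) := by
  unfold twoSidedReach at hdz
  obtain ⟨z', hz'n, hz', hne⟩ := hf (z - d) (by omega) (z + d) (by omega) (by omega)
  have hz'z : z' ≠ z := by
    rintro rfl
    simp only [Nat.dist] at hne
    omega
  have hpair : ∀ w < n, Reaches f z w → Reaches f z' w → 2 ≤ #(reachers n f w) := by
    intro w hw hzw hz'w
    calc 2 = #{z, z'} := (Finset.card_pair hz'z.symm).symm
      _ ≤ #(reachers n f w) := Finset.card_le_card <| by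
        simpa [Finset.insert_subset_iff, reachers, hz, hz'n] using ⟨hzw, hz'w⟩
  rcases reaches_or_reaches_of_ne hz' hne with h | h
  · have hzw : Reaches f z (z - d) := ⟨by omega, by simp only [Nat.dist]; omega⟩
    exact ⟨z - d, by omega, by simp only [Nat.dist]; omega, hzw, hpair _ (by omega) hzw h⟩
  · have hzw : Reaches f z (z + d) := ⟨by omega, by simp only [Nat.dist]; omega⟩
    exact ⟨z + d, by omega, by simp only [Nat.dist]; omega, hzw, hpair _ (by omega) hzw h⟩

lemma twoSidedReach_le_card_reached_twice (hf : ResolvesPath n f) (z : ℕ) :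
    twoSidedReach n f z ≤ #{w ∈ range n | Reaches f z w ∧ 2 ≤ #(reachers n f w)} := by
  rcases lt_or_ge z n with hz | hz
  swap
  · simp only [twoSidedReach]
    omega
  calc twoSidedReach n f z = #(Icc 1 (twoSidedReach n f z)) := by simp
    _ ≤ #(image (·.dist z) {w ∈ range n | Reaches f z w ∧ 2 ≤ #(reachers n f w)}) := by
      refine Finset.card_le_card fun d hd => ?_
      obtain ⟨hd1, hd2⟩ := Finset.mem_Icc.1 hd
      obtain ⟨w, hw, hwz, hzw, hμ⟩ := exists_two_le_card_reachers hf hz hd1 hd2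
      exact Finset.mem_image.2 ⟨w, Finset.mem_filter.2 ⟨Finset.mem_range.2 hw, hzw, hμ⟩, hwz⟩
    _ ≤ _ := Finset.card_image_le

lemma sum_card_reachers :
    ∑ x ∈ range n, #(reachers n f x) = ∑ z ∈ range n, #{x ∈ range n | Reaches f z x} :=
  sum_card_bipartiteAbove_eq_sum_card_bipartiteBelow _

theorem two_mul_le_five_mul_sum_add_two (hf : ResolvesPath n f) :
    2 * n ≤ 5 * ∑ z ∈ range n, f z + 2 := by
  have hreached : n ≤ #{x ∈ range n | reachers n f x ≠ ∅} + 1 := by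
    have := Finset.card_filter_add_card_filter_not (s := range n)
      (p := fun x => reachers n f x ≠ ∅)
    simp only [not_not, Finset.card_range] at this
    have := card_filter_reachers_eq_empty_le_one hf
    omega
  have hdouble : ∑ z ∈ range n, twoSidedReach n f z ≤
      ∑ w ∈ range n, #{z ∈ range n | Reaches f z w ∧ 2 ≤ #(reachers n f w)} :=
    (Finset.sum_le_sum fun z _ => twoSidedReach_le_card_reached_twice hf z).trans_eq
      (sum_card_bipartiteAbove_eq_sum_card_bipartiteBelow _)
  have hvertex : 2 * #{x ∈ range n | reachers n f x ≠ ∅} +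
      ∑ w ∈ range n, #{z ∈ range n | Reaches f z w ∧ 2 ≤ #(reachers n f w)} ≤
      2 * ∑ x ∈ range n, #(reachers n f x) := by
    rw [Finset.card_filter, Finset.mul_sum, Finset.mul_sum, ← Finset.sum_add_distrib]
    refine Finset.sum_le_sum fun w _ => ?_
    by_cases hμ : 2 ≤ #(reachers n f w)
    · have : #{z ∈ range n | Reaches f z w ∧ 2 ≤ #(reachers n f w)} = #(reachers n f w) :=
        congrArg card (Finset.filter_congr fun z _ => and_iff_left hμ)
      split_ifs <;> omega
    · have : #{z ∈ range n | Reaches f z w ∧ 2 ≤ #(reachers n f w)} = 0 :=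
        Finset.card_eq_zero.2 (Finset.filter_eq_empty_iff.2 fun z _ h => hμ h.2)
      split_ifs with h
      · have := Finset.card_pos.2 (Finset.nonempty_iff_ne_empty.2 h)
        omega
      · omega
  have hballs : 2 * ∑ x ∈ range n, #(reachers n f x) ≤
      5 * ∑ z ∈ range n, f z + ∑ z ∈ range n, twoSidedReach n f z := by
    rw [sum_card_reachers, Finset.mul_sum, Finset.mul_sum, ← Finset.sum_add_distrib]
    exact Finset.sum_le_sum fun z _ => two_mul_card_reached_le z
  omega

end ResolvesPath

lemma resolvesPath_indicator {n : ℕ} {L : ℕ → Prop} [DecidablePred L]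
    (h : ∀ x y, x < y → y < n → ∃ z < n, L z ∧ min (x.dist z) 2 ≠ min (y.dist z) 2) :
    ResolvesPath n (fun z => if L z then 1 else 0) := by
  intro x hx y hy hxy
  rcases Nat.lt_or_gt_of_ne hxy with hlt | hlt
  · obtain ⟨z, hz, hL, hne⟩ := h x y hlt hy
    exact ⟨z, hz, by simp [hL], by simpa [hL] using hne⟩
  · obtain ⟨z, hz, hL, hne⟩ := h y x hlt hx
    exact ⟨z, hz, by simp [hL], by simpa [hL] using hne.symm⟩

lemma exists_mod_five_eq_one_or_three_separating {n : ℕ} (hn : n % 5 ≠ 3) (x y : ℕ)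
    (hxy : x < y) (hy : y < n) :
    ∃ z < n, (z % 5 = 1 ∨ z % 5 = 3) ∧ min (x.dist z) 2 ≠ min (y.dist z) 2 := by
  simp only [Nat.dist]
  have : x % 5 < 5 := Nat.mod_lt _ (by norm_num)
  interval_cases hx : x % 5
  · by_cases h2 : y = x + 2
    · exact ⟨x + 3, by omega⟩
    · exact ⟨x + 1, by omega⟩
  · exact ⟨x, by omega⟩
  · by_cases h2 : y = x + 2
    · exact ⟨x - 1, by omega⟩
    · exact ⟨x + 1, by omega⟩
  · exact ⟨x, by omega⟩
  · exact ⟨x - 1, by omega⟩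

lemma exists_mod_five_eq_zero_or_three_separating {n : ℕ} (hn : n % 5 = 3) (x y : ℕ)
    (hxy : x < y) (hy : y < n) :
    ∃ z < n, (z % 5 = 0 ∨ z % 5 = 3) ∧ min (x.dist z) 2 ≠ min (y.dist z) 2 := by
  simp only [Nat.dist]
  have : x % 5 < 5 := Nat.mod_lt _ (by norm_num)
  interval_cases hx : x % 5
  · exact ⟨x, by omega⟩
  · exact ⟨x - 1, by omega⟩
  · by_cases h2 : y = x + 2
    · exact ⟨x + 3, by omega⟩
    · exact ⟨x + 1, by omega⟩
  · exact ⟨x, by omega⟩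
  · exact ⟨x - 1, by omega⟩

lemma count_mod_five_eq_one_or_three (n : ℕ) :
    Nat.count (fun i => i % 5 = 1 ∨ i % 5 = 3) n = (2 * n + 2) / 5 := by
  induction n with
  | zero => rfl
  | succ n ih =>
    rw [Nat.count_succ, ih]
    split_ifs <;> omega

lemma count_mod_five_eq_zero_or_three (n : ℕ) :
    Nat.count (fun i => i % 5 = 0 ∨ i % 5 = 3) n = (2 * n + 3) / 5 := by
  induction n with
  | zero => rfl
  | succ n ih =>
    rw [Nat.count_succ, ih]
    split_ifs with h
    · omega
    · rcases (by omega : n % 5 = 1 ∨ n % 5 = 2 ∨ n % 5 = 4) with h | h | h <;> omega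

lemma exists_resolvesPath_sum_eq (n : ℕ) :
    ∃ f, ResolvesPath n f ∧ ∑ z ∈ range n, f z = (2 * n + 2) / 5 := by
  by_cases hn : n % 5 = 3
  · refine ⟨_, resolvesPath_indicator (exists_mod_five_eq_zero_or_three_separating hn), ?_⟩
    rw [Finset.sum_boole, Nat.cast_id, ← Nat.count_eq_card_filter_range,
      count_mod_five_eq_zero_or_three]
    omega
  · refine ⟨_, resolvesPath_indicator (exists_mod_five_eq_one_or_three_separating hn), ?_⟩
    rw [Finset.sum_boole, Nat.cast_id, ← Nat.count_eq_card_filter_range,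
      count_mod_five_eq_one_or_three]

theorem stmt_3_general (n : ℕ) :
    bdim (SimpleGraph.pathGraph n) = (2 * n + 2) / 5 := by
  obtain ⟨f, hf, hsum⟩ := exists_resolvesPath_sum_eq n
  have hmem : (2 * n + 2) / 5 ∈
      {c | ∃ g : Fin n → ℕ, IsResolvingBroadcast (pathGraph n) g ∧ ∑ v, g v = c} :=
    ⟨fun v => f v, (isResolvingBroadcast_pathGraph_iff f).2 hf,
      by rw [Fin.sum_univ_eq_sum_range f n, hsum]⟩
  refine le_antisymm (Nat.sInf_le hmem) (le_csInf ⟨_, hmem⟩ ?_)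
  rintro _ ⟨g, hg, rfl⟩
  obtain ⟨F, rfl⟩ : ∃ F : ℕ → ℕ, g = fun v : Fin n => F v :=
    ⟨fun i => if h : i < n then g ⟨i, h⟩ else 0, by funext v; simp⟩
  have := ResolvesPath.two_mul_le_five_mul_sum_add_two
    ((isResolvingBroadcast_pathGraph_iff F).1 hg)
  rw [Fin.sum_univ_eq_sum_range F n]
  omega

theorem stmt_3 (n : ℕ) (hn : 4 ≤ n) :
    bdim (SimpleGraph.pathGraph n) = (2 * n + 2) / 5 :=
  stmt_3_general n
end

section
/- For every k ≥ 1 there exists a graph G of order n = k + 2^k with bdim(G) ≤ k; consequently there exist graphs of order n whose broadcast dimension is O(log n). Concretely, the graph with vertex set {v_1,...,v_k} ∪ {u_b : b ∈ {0,1}^k}, where both sets form cliques and u_b is adjacent to v_j iff the j-th bit of b is 1, has broadcast dimension at most k (achieved by the broadcast assigning 1 to each v_i and 0 elsewhere). -/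
open SimpleGraph Finset

variable {V : Type*}

/-- The graph on `Fin k ⊕ (Fin k → Bool)`: both parts are cliques, and
`u_b` is adjacent to `v_j` iff the `j`-th bit of `b` is `1`. -/
def Bgraph (k : ℕ) : SimpleGraph (Fin k ⊕ (Fin k → Bool)) :=
  SimpleGraph.fromRel (fun a b => match a, b with
    | Sum.inl _, Sum.inl _ => True
    | Sum.inr _, Sum.inr _ => True
    | Sum.inl j, Sum.inr b => b j = true
    | Sum.inr b, Sum.inl j => b j = true)


/-! With every `v_j` broadcasting at strength 1, a vertex is seen from `v_j` at truncated distance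
0, 1 or 2 according as it is `v_j`, a neighbour of `v_j`, or neither. Each `v_i` is the unique
vertex at distance 0 from itself, and two vertices `u_a ≠ u_b` are told apart by a bit `j` where
`a` and `b` differ, since exactly one of them is adjacent to `v_j`. -/

lemma truncDist_self (G : SimpleGraph V) (k : ℕ) (z : V) : truncDist G k z z = 0 := by
  simp [truncDist]

lemma truncDist_one_of_adj {G : SimpleGraph V} {x z : V} (h : G.Adj x z) :
    truncDist G 1 x z = 1 := by
  rw [truncDist, edist_eq_one_iff_adj.mpr h]
  exact min_eq_left le_self_add

lemma truncDist_one_of_not_adj {G : SimpleGraph V} {x z : V} (hne : x ≠ z) (h : ¬G.Adj x z) :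
    truncDist G 1 x z = 2 := by
  have h2 : 2 ≤ G.edist x z := by
    have h0 : G.edist x z ≠ 0 := by simpa [edist_eq_zero_iff] using hne
    have h1 : G.edist x z ≠ 1 := by simpa [edist_eq_one_iff_adj] using h
    exact (ENat.add_one_le_iff ENat.one_ne_top).mpr
      (lt_of_le_of_ne (Order.one_le_iff_ne_zero.mpr h0) h1.symm)
  exact min_eq_right h2

lemma truncDist_one_ne_of_ne {G : SimpleGraph V} {y z : V} (hyz : y ≠ z) :
    truncDist G 1 z z ≠ truncDist G 1 y z := by
  rw [truncDist_self]
  by_cases h : G.Adj y z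
  · simp [truncDist_one_of_adj h]
  · simp [truncDist_one_of_not_adj hyz h]

lemma truncDist_one_ne_of_adj_of_not_adj {G : SimpleGraph V} {x y z : V}
    (hx : G.Adj x z) (hyz : y ≠ z) (hy : ¬G.Adj y z) :
    truncDist G 1 x z ≠ truncDist G 1 y z := by
  simp [truncDist_one_of_adj hx, truncDist_one_of_not_adj hyz hy]

lemma bdim_le_sum {G : SimpleGraph V} [Fintype V] {f : V → ℕ}
    (hf : IsResolvingBroadcast G f) : bdim G ≤ ∑ v, f v :=
  Nat.sInf_le ⟨f, hf, rfl⟩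

namespace Bgraph

variable {k : ℕ}

@[simp]
lemma adj_inl_inl {i j : Fin k} : (Bgraph k).Adj (.inl i) (.inl j) ↔ i ≠ j := by
  simp [Bgraph]

@[simp]
lemma adj_inr_inl {b : Fin k → Bool} {j : Fin k} :
    (Bgraph k).Adj (.inr b) (.inl j) ↔ b j = true := by
  simp [Bgraph]

lemma exists_inl_truncDist_ne {x y : Fin k ⊕ (Fin k → Bool)} (hxy : x ≠ y) :
    ∃ j, truncDist (Bgraph k) 1 x (.inl j) ≠ truncDist (Bgraph k) 1 y (.inl j) := by
  rcases x with i | a <;> rcases y with j | b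
  · exact ⟨i, truncDist_one_ne_of_ne hxy.symm⟩
  · exact ⟨i, truncDist_one_ne_of_ne Sum.inr_ne_inl⟩
  · exact ⟨j, (truncDist_one_ne_of_ne Sum.inr_ne_inl).symm⟩
  · obtain ⟨j, hj⟩ := Function.ne_iff.mp (Sum.inr_injective.ne_iff.mp hxy)
    refine ⟨j, ?_⟩
    cases ha : a j
    · exact (truncDist_one_ne_of_adj_of_not_adj (by simpa [ha] using hj.symm)
        Sum.inr_ne_inl (by simp [ha])).symm
    · exact truncDist_one_ne_of_adj_of_not_adj (by simpa using ha)
        Sum.inr_ne_inl (by simpa [ha] using hj.symm)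

lemma isResolvingBroadcast :
    IsResolvingBroadcast (Bgraph k) (Sum.elim (fun _ => 1) (fun _ => 0)) := fun _ _ hxy =>
  let ⟨j, hj⟩ := exists_inl_truncDist_ne hxy
  ⟨.inl j, Nat.one_pos, hj⟩

end Bgraph

theorem stmt_5_general (k : ℕ) :
    Fintype.card (Fin k ⊕ (Fin k → Bool)) = k + 2 ^ k ∧
    IsResolvingBroadcast (Bgraph k) (Sum.elim (fun _ => 1) (fun _ => 0)) ∧
    bdim (Bgraph k) ≤ k := by
  refine ⟨by simp, Bgraph.isResolvingBroadcast, ?_⟩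
  simpa using bdim_le_sum (Bgraph.isResolvingBroadcast (k := k))

theorem stmt_5 (k : ℕ) (hk : 1 ≤ k) :
    Fintype.card (Fin k ⊕ (Fin k → Bool)) = k + 2 ^ k ∧
    IsResolvingBroadcast (Bgraph k) (Sum.elim (fun _ => 1) (fun _ => 0)) ∧
    bdim (Bgraph k) ≤ k :=
  stmt_5_general k
end

section
/- The maximum possible degree of any vertex in a graph of adjacency dimension k is k + 2^k − 1. -/
open SimpleGraph Finset

variable {V : Type*}

/-! A vertex outside an adjacency resolving set `S` is determined by its adjacency profile, the
set of its neighbours in `S`. The neighbours of `v` outside `S` thus have pairwise distinct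
profiles, and they miss one of the `2 ^ |S|` possible profiles: that of `v` itself if `v ∉ S`,
the empty one if `v ∈ S`. Hence `deg v ≤ |S| + 2 ^ |S| - 1`.

The bound is attained by a hub adjacent to every other vertex, together with vertices `s i`
(`i < k`) and one vertex for each proper subset `A` of `{0, …, k - 1}`, adjacent to the `s i`
with `i ∈ A`. The `s i` resolve it; no smaller set does, because counting profiles also gives
`|V| ≤ |S| + 2 ^ |S|`, while here `|V| = k + 2 ^ k`. -/

namespace SimpleGraph

variable (G : SimpleGraph V)

lemma truncDist_one_eq [DecidableEq V] [DecidableRel G.Adj] (x z : V) :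
    truncDist G 1 x z = if x = z then 0 else if G.Adj x z then 1 else 2 := by
  unfold truncDist
  split_ifs with hxz hadj
  · simp [hxz]
  · simp [edist_eq_one_iff_adj.mpr hadj]
  · have h1 : 1 < G.edist x z := by
      simpa [edist_le_one_iff_adj_or_eq, hadj, hxz] using
        (not_le : ¬ G.edist x z ≤ 1 ↔ _)
    refine min_eq_right ?_
    simpa [one_add_one_eq_two] using Order.add_one_le_of_lt h1

def adjProfile (S : Set V) (u : V) : S → Prop := fun z => G.Adj u z

theorem isAdjResolvingSet_iff_injOn {S : Set V} :
    IsAdjResolvingSet G S ↔ Sᶜ.InjOn (adjProfile G S) := by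
  classical
  constructor
  · intro hS u hu w hw hprof
    by_contra huw
    obtain ⟨z, hz, hne⟩ := hS u w huw
    have hadj : G.Adj u z ↔ G.Adj w z := iff_of_eq (congrFun hprof ⟨z, hz⟩)
    have huz : u ≠ z := fun h => hu (h ▸ hz)
    have hwz : w ≠ z := fun h => hw (h ▸ hz)
    simp [truncDist_one_eq, huz, hwz, hadj] at hne
  · intro hinj x y hxy
    by_cases hx : x ∈ S
    · exact ⟨x, hx, by simp [truncDist_one_eq, Ne.symm hxy]; split_ifs <;> simp⟩
    by_cases hy : y ∈ S
    · exact ⟨y, hy, by simp [truncDist_one_eq, hxy]; split_ifs <;> simp⟩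
    obtain ⟨⟨z, hz⟩, hne⟩ := Function.ne_iff.mp (hinj.ne hx hy hxy)
    have hxz : x ≠ z := fun h => hx (h ▸ hz)
    have hyz : y ≠ z := fun h => hy (h ▸ hz)
    refine ⟨z, hz, ?_⟩
    simp only [adjProfile, ne_eq, eq_iff_iff] at hne
    by_cases h : G.Adj x z <;> simp_all [truncDist_one_eq]

lemma card_finset_coe_fun_prop [DecidableEq V] (S : Finset V) :
    Fintype.card (↥(S : Set V) → Prop) = 2 ^ S.card := by
  rw [Fintype.card_fun, Fintype.card_prop]
  simp

variable [Fintype V]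

lemma card_compl_le_two_pow [DecidableEq V] {S : Finset V} (hS : IsAdjResolvingSet G S) :
    Sᶜ.card ≤ 2 ^ S.card := by
  rw [← card_finset_coe_fun_prop, ← Finset.card_univ]
  refine Finset.card_le_card_of_injOn (adjProfile G S) (fun _ _ => mem_univ _) ?_
  simpa [Set.InjOn] using (isAdjResolvingSet_iff_injOn G).mp hS

lemma degree_le_of_isAdjResolvingSet [DecidableRel G.Adj] {S : Finset V}
    (hS : IsAdjResolvingSet G S) (v : V) : G.degree v ≤ S.card + 2 ^ S.card - 1 := by
  classical
  have hinj := (isAdjResolvingSet_iff_injOn G).mp hS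
  obtain ⟨p, hp⟩ : ∃ p, ∀ u ∈ G.neighborFinset v \ S, adjProfile G S u ≠ p := by
    by_cases hv : v ∈ S
    · refine ⟨fun _ => False, fun u hu h => ?_⟩
      have hadj : G.Adj u v := (G.mem_neighborFinset v u).mp (mem_sdiff.mp hu).1 |>.symm
      exact (congrFun h ⟨v, hv⟩).mp hadj
    · refine ⟨adjProfile G S v, fun u hu h => ?_⟩
      obtain ⟨huN, huS⟩ := mem_sdiff.mp hu
      rw [hinj huS hv h] at huN
      exact G.notMem_neighborFinset_self v huN
  have hout : (G.neighborFinset v \ S).card ≤ 2 ^ S.card - 1 :=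
    calc (G.neighborFinset v \ S).card
      _ ≤ ((univ : Finset (↥(S : Set V) → Prop)).erase p).card :=
        Finset.card_le_card_of_injOn (adjProfile G S)
          (fun u hu => mem_erase.mpr ⟨hp u hu, mem_univ _⟩)
          (hinj.mono fun u hu => (mem_sdiff.mp hu).2)
      _ = 2 ^ S.card - 1 := by
        rw [card_erase_of_mem (mem_univ p), card_univ, card_finset_coe_fun_prop]
  have hin : (G.neighborFinset v ∩ S).card ≤ S.card := card_le_card inter_subset_right
  have hsplit := card_inter_add_card_sdiff (G.neighborFinset v) S
  have := @Nat.one_le_two_pow S.card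
  rw [← card_neighborFinset_eq_degree]
  omega

lemma exists_isAdjResolvingSet_card_eq_adim :
    ∃ S : Finset V, IsAdjResolvingSet G S ∧ S.card = adim G :=
  Nat.sInf_mem (s := {n | ∃ S : Finset V, IsAdjResolvingSet G S ∧ S.card = n})
    ⟨_, univ, (isAdjResolvingSet_iff_injOn G).mpr (by simp), rfl⟩

lemma adim_le_card {S : Finset V} (hS : IsAdjResolvingSet G S) : adim G ≤ S.card :=
  Nat.sInf_le ⟨S, hS, rfl⟩

lemma degree_le_adim_add_two_pow_sub_one [DecidableRel G.Adj] (v : V) :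
    G.degree v ≤ adim G + 2 ^ adim G - 1 := by
  obtain ⟨S, hS, hcard⟩ := exists_isAdjResolvingSet_card_eq_adim G
  exact hcard ▸ degree_le_of_isAdjResolvingSet G hS v

lemma card_le_adim_add_two_pow : Fintype.card V ≤ adim G + 2 ^ adim G := by
  classical
  obtain ⟨S, hS, hcard⟩ := exists_isAdjResolvingSet_card_eq_adim G
  have := card_compl_le_two_pow G hS
  rw [card_compl] at this
  have := S.card_le_univ
  rw [← hcard]
  omega

end SimpleGraph

abbrev HubVertex (k : ℕ) := Option (Fin k ⊕ {A : Finset (Fin k) // A ≠ univ})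

def hubAdj (k : ℕ) : HubVertex k → HubVertex k → Prop
  | none, some _ | some _, none => True
  | some (.inl i), some (.inr A) | some (.inr A), some (.inl i) => i ∈ A.1
  | _, _ => False

def hubGraph (k : ℕ) : SimpleGraph (HubVertex k) where
  Adj := hubAdj k
  symm := ⟨by rintro (_ | i | A) (_ | j | B) h <;> simp_all [hubAdj]⟩
  loopless := ⟨by rintro (_ | i | A) h <;> simp_all [hubAdj]⟩

lemma card_hubVertex (k : ℕ) : Fintype.card (HubVertex k) = k + 2 ^ k := by
  have hproper : Fintype.card {A : Finset (Fin k) // A ≠ univ} = 2 ^ k - 1 := by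
    simp [Fintype.card_subtype_compl]
  have := @Nat.one_le_two_pow k
  simp only [Fintype.card_option, Fintype.card_sum, Fintype.card_fin, hproper]
  omega

namespace hubGraph

variable (k : ℕ)

lemma isUniversal_none : (hubGraph k).IsUniversal none := by
  rintro (_ | i | A) h <;> simp_all [hubGraph, hubAdj]

lemma degree_none [DecidableRel (hubGraph k).Adj] : (hubGraph k).degree none = k + 2 ^ k - 1 := by
  rw [((hubGraph k).degree_eq_card_sub_one none).mpr (isUniversal_none k), card_hubVertex]

def leaves : Finset (HubVertex k) := univ.map ⟨fun i => some (.inl i), fun _ _ => by simp⟩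

lemma some_inl_mem_leaves (i : Fin k) : some (.inl i) ∈ leaves k :=
  mem_map.mpr ⟨i, mem_univ _, rfl⟩

lemma isAdjResolvingSet_leaves : IsAdjResolvingSet (hubGraph k) (leaves k) := by
  rw [isAdjResolvingSet_iff_injOn]
  intro x hx y hy hxy
  have hadj (i : Fin k) : hubAdj k x (some (.inl i)) ↔ hubAdj k y (some (.inl i)) :=
    iff_of_eq (congrFun hxy ⟨_, some_inl_mem_leaves k i⟩)
  obtain _ | i | A := x
  · obtain _ | j | B := y
    · rfl
    · exact absurd (some_inl_mem_leaves k j) hy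
    · exact absurd (eq_univ_of_forall fun i => by simpa [hubAdj] using hadj i) B.2
  · exact absurd (some_inl_mem_leaves k i) hx
  · obtain _ | j | B := y
    · exact absurd (eq_univ_of_forall fun i => by simpa [hubAdj] using hadj i) A.2
    · exact absurd (some_inl_mem_leaves k j) hy
    · exact congrArg (some ∘ Sum.inr) <|
        Subtype.ext (Finset.ext fun i => by simpa [hubAdj] using hadj i)

lemma adim_eq : adim (hubGraph k) = k := by
  refine le_antisymm ?_ ?_
  · simpa [leaves] using adim_le_card _ (isAdjResolvingSet_leaves k)
  · have := card_le_adim_add_two_pow (hubGraph k)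
    rw [card_hubVertex] at this
    by_contra! hlt
    have := Nat.pow_lt_pow_right one_lt_two hlt
    omega

end hubGraph

theorem stmt_7_general (k : ℕ) :
    (∀ (V : Type) (_ : Fintype V) (_ : DecidableEq V) (G : SimpleGraph V)
      (_ : ∀ v w : V, Decidable (G.Adj v w)),
      adim G = k → ∀ v : V, G.degree v ≤ k + 2 ^ k - 1) ∧
    ∃ (V : Type) (_ : Fintype V) (_ : DecidableEq V) (G : SimpleGraph V)
      (_ : ∀ v w : V, Decidable (G.Adj v w)) (v : V),
      adim G = k ∧ G.degree v = k + 2 ^ k - 1 := by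
  refine ⟨fun V _ _ G _ hadim v => hadim ▸ G.degree_le_adim_add_two_pow_sub_one v, ?_⟩
  classical
  exact ⟨HubVertex k, inferInstance, inferInstance, hubGraph k, inferInstance, none,
    hubGraph.adim_eq k, hubGraph.degree_none k⟩

theorem stmt_7 (k : ℕ) (hk : 1 ≤ k) :
    (∀ (V : Type) (_ : Fintype V) (_ : DecidableEq V) (G : SimpleGraph V)
      (_ : ∀ v w : V, Decidable (G.Adj v w)),
      adim G = k → ∀ v : V, G.degree v ≤ k + 2 ^ k - 1) ∧
    ∃ (V : Type) (_ : Fintype V) (_ : DecidableEq V) (G : SimpleGraph V)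
      (_ : ∀ v w : V, Decidable (G.Adj v w)) (v : V),
      adim G = k ∧ G.degree v = k + 2 ^ k - 1 :=
  stmt_7_general k
end

section
/- If G has broadcast dimension k, then any clique in G has at most 2^k vertices, and this bound is attained for every k. -/
open SimpleGraph Finset

variable {V : Type*}

/-! Along a clique the truncated distances to a fixed vertex `z` differ by at most one, so a
broadcasting vertex `z` records one bit of each clique vertex `x`: whether `x` is at the largest of
these distances. A resolving broadcast separates the clique vertices by these bits, and it has at
most `∑ f` broadcasting vertices, hence at most `2 ^ ∑ f` clique vertices. Conversely, in
`bitCliqueGraph k` the `k` extra vertices, broadcasting with strength 1, read off the letters of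
the `2 ^ k` words forming its clique. -/

lemma truncDist_eq_zero_iff (G : SimpleGraph V) (n : ℕ) {x z : V} :
    truncDist G n x z = 0 ↔ x = z := by
  constructor
  · intro h
    rcases min_eq_iff.1 h with ⟨h, -⟩ | ⟨h, -⟩
    · exact edist_eq_zero_iff.1 h
    · exact absurd h (by positivity)
  · rintro rfl
    simp [truncDist]

lemma truncDist_eq_one_iff (G : SimpleGraph V) {n : ℕ} (hn : 0 < n) {x z : V} :
    truncDist G n x z = 1 ↔ G.Adj x z := by
  have : (1 : ℕ∞) < n + 1 := by norm_cast; omega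
  rw [truncDist, ← edist_eq_one_iff_adj, min_eq_iff]
  constructor
  · rintro (⟨h, -⟩ | ⟨h, -⟩)
    · exact h
    · exact absurd h this.ne'
  · intro h
    exact Or.inl ⟨h, h ▸ this.le⟩

lemma truncDist_ne_self_of_ne (G : SimpleGraph V) (n : ℕ) {x z : V} (h : x ≠ z) :
    truncDist G n x z ≠ truncDist G n z z := by
  rw [(truncDist_eq_zero_iff G n).2 rfl, Ne, truncDist_eq_zero_iff]
  exact h

lemma truncDist_le_truncDist_add_one_of_adj (G : SimpleGraph V) (n : ℕ) {a b : V} (z : V)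
    (h : G.Adj a b) : truncDist G n a z ≤ truncDist G n b z + 1 := by
  have hd : G.edist a z ≤ G.edist b z + 1 := by
    calc G.edist a z ≤ G.edist a b + G.edist b z := SimpleGraph.edist_triangle
      _ = G.edist b z + 1 := by rw [edist_eq_one_iff_adj.2 h, add_comm]
  calc truncDist G n a z ≤ min (G.edist b z + 1) ((n : ℕ∞) + 1 + 1) :=
        min_le_min hd le_self_add
    _ = truncDist G n b z + 1 := by rw [truncDist, min_add_add_right]

lemma SimpleGraph.IsClique.truncDist_eq_sup_of_lt {G : SimpleGraph V} {s : Finset V}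
    (hs : G.IsClique (s : Set V)) (n : ℕ) {x y z : V} (hx : x ∈ s) (hy : y ∈ s)
    (hlt : truncDist G n x z < truncDist G n y z) :
    truncDist G n y z = s.sup (truncDist G n · z) := by
  have hsup : s.sup (truncDist G n · z) ≤ truncDist G n x z + 1 := by
    refine Finset.sup_le fun w hw => ?_
    rcases eq_or_ne w x with rfl | hwx
    · exact le_self_add
    · exact truncDist_le_truncDist_add_one_of_adj G n z (hs hw hx hwx)
  exact le_antisymm (Finset.le_sup (f := (truncDist G n · z)) hy)
    (hsup.trans (Order.add_one_le_of_lt hlt))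

lemma card_filter_pos_le_sum [Fintype V] (f : V → ℕ) :
    #{v | 0 < f v} ≤ ∑ v, f v :=
  calc #{v | 0 < f v} = ∑ _ ∈ {v | 0 < f v}, 1 := Finset.card_eq_sum_ones _
    _ ≤ ∑ v ∈ {v | 0 < f v}, f v := Finset.sum_le_sum fun _ hv => (Finset.mem_filter.1 hv).2
    _ ≤ ∑ v, f v := Finset.sum_le_sum_of_subset (Finset.subset_univ _)

lemma IsResolvingBroadcast.card_clique_le [Fintype V] {G : SimpleGraph V} {f : V → ℕ}
    (hf : IsResolvingBroadcast G f) {s : Finset V} (hs : G.IsClique (s : Set V)) :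
    #s ≤ 2 ^ ∑ v, f v := by
  classical
  let T : Finset V := {v | 0 < f v}
  let code : V → T → Bool := fun x z =>
    decide (truncDist G (f z) x z = s.sup (truncDist G (f z) · z))
  have hcode : Set.InjOn code s := by
    intro x hx y hy hxy
    by_contra hne
    obtain ⟨z, hz, hdist⟩ := hf x y hne
    have hbit := congrFun hxy ⟨z, Finset.mem_filter.2 ⟨Finset.mem_univ z, hz⟩⟩
    simp only [code, decide_eq_decide] at hbit
    rcases hdist.lt_or_gt with hlt | hlt
    · have hsup := IsClique.truncDist_eq_sup_of_lt hs _ hx hy hlt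
      exact hlt.ne ((hbit.2 hsup).trans hsup.symm)
    · have hsup := IsClique.truncDist_eq_sup_of_lt hs _ hy hx hlt
      exact hlt.ne ((hbit.1 hsup).trans hsup.symm)
  calc #s ≤ Fintype.card (T → Bool) :=
        Finset.card_le_card_of_injOn code (fun _ _ => Finset.mem_univ _) hcode
    _ = 2 ^ #T := by rw [Fintype.card_fun, Fintype.card_bool, Fintype.card_coe]
    _ ≤ 2 ^ ∑ v, f v := Nat.pow_le_pow_right two_pos (card_filter_pos_le_sum f)

lemma isResolvingBroadcast_one (G : SimpleGraph V) : IsResolvingBroadcast G (fun _ => 1) :=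
  fun x _ hxy => ⟨x, one_pos, fun h => truncDist_ne_self_of_ne G 1 hxy.symm h.symm⟩

lemma exists_isResolvingBroadcast_sum_eq_bdim [Fintype V] (G : SimpleGraph V) :
    ∃ f : V → ℕ, IsResolvingBroadcast G f ∧ ∑ v, f v = bdim G :=
  Nat.sInf_mem (s := {c | ∃ f : V → ℕ, IsResolvingBroadcast G f ∧ ∑ v, f v = c})
    ⟨_, _, isResolvingBroadcast_one G, rfl⟩

lemma card_clique_le_two_pow_bdim [Fintype V] {G : SimpleGraph V} {s : Finset V}
    (hs : G.IsClique (s : Set V)) : #s ≤ 2 ^ bdim G := by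
  obtain ⟨f, hf, hsum⟩ := exists_isResolvingBroadcast_sum_eq_bdim G
  exact hsum ▸ hf.card_clique_le hs

/-- A clique on the `2 ^ k` words `a : Fin k → Bool`, together with `k` independent vertices,
the `i`-th one adjacent to the words with `a i = true`. -/
def bitCliqueGraph (k : ℕ) : SimpleGraph ((Fin k → Bool) ⊕ Fin k) where
  Adj
    | .inl a, .inl b => a ≠ b
    | .inl a, .inr i => a i
    | .inr i, .inl a => a i
    | .inr _, .inr _ => False
  symm := ⟨by rintro (a | i) (b | j) h <;> first | exact h | exact Ne.symm h⟩
  loopless := ⟨by rintro (a | i) h <;> simp_all⟩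

namespace bitCliqueGraph

lemma adj_inl_inr {k : ℕ} {a : Fin k → Bool} {i : Fin k} :
    (bitCliqueGraph k).Adj (.inl a) (.inr i) ↔ a i = true := Iff.rfl

def broadcast (k : ℕ) : (Fin k → Bool) ⊕ Fin k → ℕ := Sum.elim 0 1

lemma isResolvingBroadcast (k : ℕ) : IsResolvingBroadcast (bitCliqueGraph k) (broadcast k) := by
  rintro (a | i) (b | j) hxy
  · obtain ⟨i, hi⟩ := Function.ne_iff.1 fun h : a = b => hxy (h ▸ rfl)
    refine ⟨.inr i, one_pos, fun h => hi ?_⟩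
    have hadj := congrArg (· = 1) h
    simp only [broadcast, Sum.elim_inr, Pi.one_apply, eq_iff_iff,
      truncDist_eq_one_iff _ one_pos, adj_inl_inr] at hadj
    exact Bool.eq_iff_iff.2 hadj
  · exact ⟨.inr j, one_pos, truncDist_ne_self_of_ne _ 1 hxy⟩
  · exact ⟨.inr i, one_pos, fun h => truncDist_ne_self_of_ne _ 1 hxy.symm h.symm⟩
  · exact ⟨.inr i, one_pos, fun h => truncDist_ne_self_of_ne _ 1 hxy.symm h.symm⟩

lemma sum_broadcast (k : ℕ) : ∑ v, broadcast k v = k := by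
  simp [broadcast, Fintype.sum_sum_type]

def clique (k : ℕ) : Finset ((Fin k → Bool) ⊕ Fin k) := Finset.univ.map .inl

lemma card_clique (k : ℕ) : #(clique k) = 2 ^ k := by
  simp [clique]

lemma isClique_clique (k : ℕ) : (bitCliqueGraph k).IsClique (clique k : Set _) := by
  rw [clique, Finset.coe_map]
  rintro _ ⟨a, -, rfl⟩ _ ⟨b, -, rfl⟩ hab
  exact fun h => hab (h ▸ rfl)

lemma bdim_eq (k : ℕ) : bdim (bitCliqueGraph k) = k := by
  refine le_antisymm (Nat.sInf_le ⟨broadcast k, isResolvingBroadcast k, sum_broadcast k⟩) ?_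
  have h := card_clique_le_two_pow_bdim (isClique_clique k)
  rwa [card_clique, Nat.pow_le_pow_iff_right one_lt_two] at h

end bitCliqueGraph

theorem stmt_8 (k : ℕ) :
    (∀ (V : Type) (_ : Fintype V) (_ : DecidableEq V) (G : SimpleGraph V)
      (s : Finset V), bdim G = k → G.IsClique ↑s → s.card ≤ 2 ^ k) ∧
    ∃ (V : Type) (_ : Fintype V) (_ : DecidableEq V) (G : SimpleGraph V)
      (s : Finset V), bdim G = k ∧ G.IsClique ↑s ∧ s.card = 2 ^ k :=
  ⟨fun _ _ _ _ _ hbdim hs => hbdim ▸ card_clique_le_two_pow_bdim hs,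
    ⟨_, inferInstance, inferInstance, bitCliqueGraph k, bitCliqueGraph.clique k,
      bitCliqueGraph.bdim_eq k, bitCliqueGraph.isClique_clique k, bitCliqueGraph.card_clique k⟩⟩
end

section
/- For every graph G of diameter d, bdim(G) ≥ d/3. More precisely, if f is any resolving broadcast of G then |supp(f)| + 2·Σ_{v} f(v) ≥ d, hence 3·Σ_v f(v) ≥ d. -/
open SimpleGraph Finset

variable {V : Type*}

lemma dist_getVert_le' {G : SimpleGraph V} (hc : G.Connected) {u v : V}
    (p : G.Walk u v) (i : ℕ) : G.dist u (p.getVert i) ≤ i := by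
  induction i with
  | zero => simp [SimpleGraph.Walk.getVert_zero]
  | succ n ih =>
    by_cases h : n + 1 ≤ p.length
    · have hadj := p.adj_getVert_succ (Nat.lt_of_succ_le h)
      have h1 : G.dist (p.getVert n) (p.getVert (n+1)) = 1 :=
        SimpleGraph.dist_eq_one_iff_adj.mpr hadj
      calc G.dist u (p.getVert (n+1))
          ≤ G.dist u (p.getVert n) + G.dist (p.getVert n) (p.getVert (n+1)) :=
            hc.dist_triangle
        _ ≤ n + 1 := by omega
    · rw [p.getVert_of_length_le (by omega)]
      calc G.dist u v ≤ p.length := SimpleGraph.dist_le p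
        _ ≤ n + 1 := by omega

lemma edist_eq_coe_dist {G : SimpleGraph V} (hc : G.Connected) (u v : V) :
    G.edist u v = (G.dist u v : ℕ∞) :=
  (ENat.coe_toNat (SimpleGraph.edist_ne_top_iff_reachable.mpr (hc u v))).symm

theorem stmt_9 {V : Type*} [Fintype V] [DecidableEq V] (G : SimpleGraph V)
    (hc : G.Connected) (d : ℕ) (hle : ∀ x y : V, G.dist x y ≤ d)
    (hex : ∃ x y : V, G.dist x y = d) :
    (∀ f : V → ℕ, IsResolvingBroadcast G f →
      d ≤ (Finset.univ.filter fun v => 0 < f v).card + 2 * ∑ v, f v ∧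
      d ≤ 3 * ∑ v, f v) ∧
    d ≤ 3 * bdim G := by
  obtain ⟨x, y, hxy⟩ := hex
  obtain ⟨p, hp⟩ := hc.exists_walk_length_eq_dist x y
  rw [hxy] at hp
  set v : ℕ → V := p.getVert with hv
  -- distance from x to v i is exactly i, for i ≤ d
  have hdxv : ∀ i, i ≤ d → G.dist x (v i) = i := by
    intro i hi
    have h1 : G.dist x (v i) ≤ i := dist_getVert_le' hc p i
    have h2 : G.dist (v i) y ≤ d - i := by
      have := dist_getVert_le' hc p.reverse (d - i)
      rw [SimpleGraph.Walk.getVert_reverse, hp] at this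
      have hdi : d - (d - i) = i := by omega
      rw [hdi] at this
      rw [SimpleGraph.dist_comm]
      exact this
    have h3 : G.dist x y ≤ G.dist x (v i) + G.dist (v i) y := hc.dist_triangle
    omega
  -- injectivity of v on range (d+1)
  have hvinj : ∀ i j, i ≤ d → j ≤ d → v i = v j → i = j := by
    intro i j hi hj hij
    have := hdxv i hi
    rw [hij, hdxv j hj] at this
    omega
  -- key: if i outside window of z, trunc dist is f z + 1
  have hkey : ∀ (f : V → ℕ) (z : V) (i : ℕ), i ≤ d → 0 < f z →
      i ∉ Finset.Icc (G.dist x z - f z) (G.dist x z + f z) →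
      truncDist G (f z) (v i) z = ((f z : ℕ∞) + 1) := by
    intro f z i hi hfz hnotin
    set k := f z
    set a := G.dist x z with ha
    have hdist : k + 1 ≤ G.dist (v i) z := by
      simp only [Finset.mem_Icc, not_and_or, not_le] at hnotin
      have t1 : G.dist x (v i) ≤ G.dist x z + G.dist z (v i) := hc.dist_triangle
      have t2 : G.dist x z ≤ G.dist x (v i) + G.dist (v i) z := hc.dist_triangle
      rw [hdxv i hi] at t1 t2
      have hco : G.dist z (v i) = G.dist (v i) z := SimpleGraph.dist_comm
      rw [hco] at t1
      rcases hnotin with h | h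
      · have : 0 < a - k := by omega
        omega
      · omega
    unfold truncDist
    rw [edist_eq_coe_dist hc]
    apply min_eq_right
    have : ((k : ℕ∞) + 1) = ((k + 1 : ℕ) : ℕ∞) := by push_cast; ring
    rw [this]
    exact_mod_cast hdist
  -- main counting argument
  have main : ∀ f : V → ℕ, IsResolvingBroadcast G f →
      d ≤ (Finset.univ.filter fun w => 0 < f w).card + 2 * ∑ w, f w := by
    intro f hf
    set S := (Finset.univ.filter fun w => 0 < f w) with hS
    set T : Finset ℕ := S.biUnion (fun z => Finset.Icc (G.dist x z - f z) (G.dist x z + f z))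
      with hT
    -- at most one element of range (d+1) is outside T
    have hout : (Finset.range (d+1) \ T).card ≤ 1 := by
      by_contra h
      push_neg at h
      obtain ⟨i, himem, j, hjmem, hij⟩ := Finset.one_lt_card.mp h
      rw [Finset.mem_sdiff, Finset.mem_range] at himem hjmem
      have hvne : v i ≠ v j := fun e => hij (hvinj i j (by omega) (by omega) e)
      obtain ⟨z, hz, hne⟩ := hf (v i) (v j) hvne
      have hzS : z ∈ S := by simp [hS, hz]
      have hi' : i ∉ Finset.Icc (G.dist x z - f z) (G.dist x z + f z) :=
        fun hmem => himem.2 (Finset.mem_biUnion.mpr ⟨z, hzS, hmem⟩)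
      have hj' : j ∉ Finset.Icc (G.dist x z - f z) (G.dist x z + f z) :=
        fun hmem => hjmem.2 (Finset.mem_biUnion.mpr ⟨z, hzS, hmem⟩)
      exact hne ((hkey f z i (by omega) hz hi').trans (hkey f z j (by omega) hz hj').symm)
    have hTcard : T.card ≤ ∑ z ∈ S, (2 * f z + 1) := by
      calc T.card ≤ ∑ z ∈ S, (Finset.Icc (G.dist x z - f z) (G.dist x z + f z)).card :=
            Finset.card_biUnion_le
        _ ≤ ∑ z ∈ S, (2 * f z + 1) := by
            apply Finset.sum_le_sum
            intro z _
            rw [Nat.card_Icc]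
            omega
    have hcount : d + 1 ≤ T.card + 1 := by
      have := Finset.card_le_card_sdiff_add_card (s := Finset.range (d+1)) (t := T)
      rw [Finset.card_range] at this
      omega
    have hsum : ∑ z ∈ S, (2 * f z + 1) = S.card + 2 * ∑ z ∈ S, f z := by
      rw [Finset.sum_add_distrib, Finset.sum_const, smul_eq_mul, mul_one, ← Finset.mul_sum,
        add_comm]
    have hsub : ∑ z ∈ S, f z ≤ ∑ w, f w :=
      Finset.sum_le_sum_of_subset (Finset.filter_subset _ _)
    omega
  have main2 : ∀ f : V → ℕ, IsResolvingBroadcast G f → d ≤ 3 * ∑ w, f w := by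
    intro f hf
    have h1 := main f hf
    set S := (Finset.univ.filter fun w => 0 < f w) with hS
    have hcard : S.card ≤ ∑ z ∈ S, f z := by
      calc S.card = ∑ _z ∈ S, 1 := by simp
        _ ≤ ∑ z ∈ S, f z := Finset.sum_le_sum (fun z hz => by
            simp [hS] at hz; omega)
    have hsub : ∑ z ∈ S, f z ≤ ∑ w, f w :=
      Finset.sum_le_sum_of_subset (Finset.filter_subset _ _)
    omega
  refine ⟨fun f hf => ⟨main f hf, main2 f hf⟩, ?_⟩
  -- bdim part
  have hne : {c : ℕ | ∃ f : V → ℕ, IsResolvingBroadcast G f ∧ ∑ w, f w = c}.Nonempty := by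
    refine ⟨∑ _w : V, Fintype.card V, fun _ => Fintype.card V, ?_, rfl⟩
    intro a b hab
    refine ⟨a, Fintype.card_pos_iff.mpr ⟨x⟩, ?_⟩
    unfold truncDist
    rw [SimpleGraph.edist_self]
    intro h
    have h0 : (0 : ℕ∞) < min (G.edist b a) ((Fintype.card V : ℕ∞) + 1) := by
      apply lt_min
      · exact SimpleGraph.edist_pos_of_ne hab.symm
      · exact lt_of_lt_of_le zero_lt_one le_add_self
    rw [← h] at h0
    simp at h0
  obtain ⟨f, hf, hfs⟩ := Nat.sInf_mem hne
  have := main2 f hf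
  rw [hfs] at this
  exact this
end

section
/- If f is a resolving broadcast for a graph G of order n with support of size y, then y + ∏_{v ∈ supp(f)} (f(v)+1) ≥ n. -/
open SimpleGraph Finset

variable {V : Type*}

/-!
Every vertex `x` outside the support `S` of a resolving broadcast is at distance at least `1`
from each `z ∈ S`, so `d_{f z}(x, z)` takes one of the `f z + 1` values `1, …, f z + 1`. The
vector of these values determines `x`, so at most `∏_{z ∈ S} (f z + 1)` vertices lie outside `S`.
-/

namespace truncDist

variable (G : SimpleGraph V) (k : ℕ) (x y : V)

theorem le_succ : truncDist G k x y ≤ (k + 1 : ℕ) := by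
  exact_mod_cast min_le_right _ _

theorem ne_top : truncDist G k x y ≠ ⊤ :=
  ne_top_of_le_ne_top (ENat.natCast_ne_top (k + 1)) (le_succ G k x y)

theorem toNat_le_succ : (truncDist G k x y).toNat ≤ k + 1 := by
  simpa only [ENat.toNat_natCast] using
    ENat.toNat_le_toNat (le_succ G k x y) (ENat.natCast_ne_top (k + 1))

theorem one_le_toNat {x y : V} (hxy : x ≠ y) : 1 ≤ (truncDist G k x y).toNat := by
  have h : (1 : ℕ∞) ≤ truncDist G k x y :=
    le_min (Order.one_le_iff_ne_zero.mpr (by simpa [SimpleGraph.edist_eq_zero_iff] using hxy))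
      (by exact_mod_cast Nat.le_add_left 1 k)
  simpa using ENat.toNat_le_toNat h (ne_top G k x y)

end truncDist

/-- Shifted down by one because off `S` every truncated distance to `S` is at least `1`. -/
noncomputable def broadcastCode (G : SimpleGraph V) (f : V → ℕ) (S : Finset V) (x : V) :
    (z : S) → Fin (f z + 1) :=
  fun z => ⟨(truncDist G (f z) x z).toNat - 1, by
    have := truncDist.toNat_le_succ G (f z) x z
    omega⟩

theorem broadcastCode_injOn {G : SimpleGraph V} {f : V → ℕ} (hf : IsResolvingBroadcast G f)
    {S : Finset V} (hS : ∀ z, 0 < f z → z ∈ S) :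
    Set.InjOn (broadcastCode G f S) (↑S)ᶜ := by
  intro x hx y hy hxy
  by_contra hne
  obtain ⟨z, hz, hdist⟩ := hf x y hne
  have hzS := hS z hz
  have hxz : x ≠ z := by rintro rfl; exact hx hzS
  have hyz : y ≠ z := by rintro rfl; exact hy hzS
  have hcode := congrArg Fin.val (congrFun hxy ⟨z, hzS⟩)
  simp only [broadcastCode] at hcode
  have := truncDist.one_le_toNat G (f z) hxz
  have := truncDist.one_le_toNat G (f z) hyz
  apply hdist
  rw [← ENat.natCast_toNat (truncDist.ne_top G (f z) x z),
    ← ENat.natCast_toNat (truncDist.ne_top G (f z) y z)]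
  exact congrArg _ (by omega)

theorem card_compl_le_prod_of_isResolvingBroadcast [Fintype V] [DecidableEq V]
    {G : SimpleGraph V} {f : V → ℕ} (hf : IsResolvingBroadcast G f)
    {S : Finset V} (hS : ∀ z, 0 < f z → z ∈ S) :
    Sᶜ.card ≤ ∏ z ∈ S, (f z + 1) := by
  calc Sᶜ.card ≤ (univ : Finset ((z : S) → Fin (f z + 1))).card :=
        card_le_card_of_injOn _ (fun _ _ => mem_univ _)
          (by simpa only [coe_compl] using broadcastCode_injOn hf hS)
    _ = ∏ z ∈ S, (f z + 1) := by
        simp [Fintype.card_pi, prod_attach S (fun z => f z + 1)]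

theorem stmt_11 {V : Type*} [Fintype V] [DecidableEq V] (G : SimpleGraph V)
    (f : V → ℕ) (hf : IsResolvingBroadcast G f) :
    Fintype.card V ≤ (Finset.univ.filter fun v => 0 < f v).card +
      ∏ v ∈ Finset.univ.filter (fun v => 0 < f v), (f v + 1) := by
  rw [← card_add_card_compl (univ.filter fun v => 0 < f v)]
  exact Nat.add_le_add_left
    (card_compl_le_prod_of_isResolvingBroadcast hf fun z hz => mem_filter.mpr ⟨mem_univ z, hz⟩) _
end

section
/- There is a constant c > 0 such that every graph G of order n satisfies bdim(G) ≥ c·log n. (In particular bdim(G) ≥ min{ln(n/2), (e−1)ln(n/2)} for n sufficiently large.) -/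
open SimpleGraph Finset

variable {V : Type*}

lemma add_two_le_three_pow {k : ℕ} (hk : 1 ≤ k) : k + 2 ≤ 3 ^ k := by
  induction k with
  | zero => omega
  | succ n ih =>
    rcases Nat.eq_or_lt_of_le hk with h | h
    · simp [← h]
    · have h1 := ih (by omega)
      have h2 : 3 ^ n ≤ 3 ^ (n + 1) := Nat.pow_le_pow_right (by norm_num) (by omega)
      omega

lemma truncDist_le {V : Type} (G : SimpleGraph V) (k : ℕ) (x z : V) :
    truncDist G k x z ≤ ((k + 1 : ℕ) : ℕ∞) := by
  simpa [truncDist, Nat.cast_add] using min_le_right (G.edist x z) ((k : ℕ∞) + 1)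

lemma truncDist_ne_top {V : Type} (G : SimpleGraph V) (k : ℕ) (x z : V) :
    truncDist G k x z ≠ ⊤ :=
  ne_top_of_le_ne_top (ENat.coe_ne_top _) (truncDist_le G k x z)

lemma card_le_three_pow {V : Type} [Fintype V] [DecidableEq V] (G : SimpleGraph V) :
    Fintype.card V ≤ 3 ^ bdim G := by
  classical
  have hone : IsResolvingBroadcast G (fun _ => 1) := by
    intro x y hxy
    refine ⟨x, one_pos, ?_⟩
    have h1 : truncDist G 1 x x = 0 := by
      simp [truncDist, SimpleGraph.edist_self]
    have h2 : truncDist G 1 y x ≠ 0 := by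
      intro h0
      rcases min_eq_iff.mp h0 with ⟨h, -⟩ | ⟨h, -⟩
      · exact hxy (SimpleGraph.edist_eq_zero_iff.mp h).symm
      · simp at h
    rw [h1]
    exact fun h => h2 h.symm
  have hne : {c : ℕ | ∃ f : V → ℕ, IsResolvingBroadcast G f ∧ ∑ v, f v = c}.Nonempty :=
    ⟨∑ v : V, 1, fun _ => 1, hone, rfl⟩
  obtain ⟨f, hf, hsum⟩ := Nat.sInf_mem hne
  set S : Finset V := Finset.univ.filter (fun z => 0 < f z) with hS
  have hlt : ∀ (x : V) (z : V), (truncDist G (f z) x z).toNat < f z + 2 := by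
    intro x z
    exact Nat.lt_succ_of_le (ENat.toNat_le_of_le_coe (truncDist_le G (f z) x z))
  have hinj : Function.Injective
      (fun (x : V) (z : S) => (⟨(truncDist G (f z.1) x z.1).toNat, hlt x z.1⟩ :
        Fin (f z.1 + 2))) := by
    intro x y hxyeq
    by_contra hxy
    obtain ⟨z, hz, hdist⟩ := hf x y hxy
    have hzS : z ∈ S := by simp [hS, hz]
    have heq : (truncDist G (f z) x z).toNat = (truncDist G (f z) y z).toNat := by
      have := congrArg Fin.val (congrFun hxyeq ⟨z, hzS⟩)
      simpa using this
    apply hdist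
    calc truncDist G (f z) x z = ((truncDist G (f z) x z).toNat : ℕ∞) :=
          (ENat.coe_toNat (truncDist_ne_top G _ x z)).symm
      _ = ((truncDist G (f z) y z).toNat : ℕ∞) := by rw [heq]
      _ = truncDist G (f z) y z := ENat.coe_toNat (truncDist_ne_top G _ y z)
  have hcard : Fintype.card V ≤ ∏ z ∈ S, (f z + 2) := by
    calc Fintype.card V ≤ ∏ z : S, (f z.1 + 2) := by
          simpa [Fintype.card_pi] using Fintype.card_le_of_injective _ hinj
      _ = ∏ z ∈ S, (f z + 2) := Finset.prod_coe_sort S (fun z => f z + 2)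
  have hprod : ∏ z ∈ S, (f z + 2) ≤ 3 ^ (∑ z ∈ S, f z) := by
    rw [← Finset.prod_pow_eq_pow_sum]
    refine Finset.prod_le_prod' (fun z hz => add_two_le_three_pow ?_)
    simp only [hS, Finset.mem_filter] at hz
    exact hz.2
  have hsumS : ∑ z ∈ S, f z = ∑ v : V, f v :=
    Finset.sum_filter_of_ne (fun x _ hx => Nat.pos_of_ne_zero hx)
  calc Fintype.card V ≤ 3 ^ (∑ z ∈ S, f z) := le_trans hcard hprod
    _ = 3 ^ bdim G := by rw [hsumS, hsum]; rfl

theorem stmt_12 :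
    ∃ c : ℝ, 0 < c ∧ ∀ (V : Type) (_ : Fintype V) (_ : DecidableEq V)
      (G : SimpleGraph V), c * Real.log (Fintype.card V) ≤ (bdim G : ℝ) := by
  refine ⟨1 / Real.log 3, by positivity, ?_⟩
  intro V _ _ G
  rcases Nat.eq_zero_or_pos (Fintype.card V) with h0 | h0
  · simp [h0]
  have hcard := card_le_three_pow G
  have hlog : Real.log (Fintype.card V) ≤ (bdim G : ℝ) * Real.log 3 := by
    have h1 : (Fintype.card V : ℝ) ≤ (3 : ℝ) ^ (bdim G : ℕ) := by
      exact_mod_cast hcard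
    have h2 := Real.log_le_log (by exact_mod_cast h0) h1
    rwa [Real.log_pow] at h2
  rw [div_mul_eq_mul_div, div_le_iff₀ (by positivity : (0:ℝ) < Real.log 3)]
  linarith
end

section
/- Let G be a graph and e = xy ∈ E(G). If S is an adjacency resolving set of G, then S ∪ {x,y} is an adjacency resolving set of G−e; and if R is an adjacency resolving set of G−e, then R ∪ {x,y} is an adjacency resolving set of G. -/
open SimpleGraph Finset

variable {V : Type*}

open Classical in
lemma trunc1_eq (G : SimpleGraph V) (u z : V) :
    truncDist G 1 u z = if u = z then 0 else if G.Adj u z then 1 else 2 := by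
  unfold truncDist
  split_ifs with h1 h2
  · subst h1; simp [SimpleGraph.edist_self]
  · rw [(SimpleGraph.edist_eq_one_iff_adj).mpr h2]
    exact min_eq_left (by norm_num)
  · have h0 : G.edist u z ≠ 0 := fun h =>
      h1 (SimpleGraph.edist_eq_zero_iff.mp h)
    have h1' : G.edist u z ≠ 1 := fun h =>
      h2 (SimpleGraph.edist_eq_one_iff_adj.mp h)
    have h2' : ((1 : ℕ∞) + 1) ≤ G.edist u z := by
      have := lt_of_le_of_ne (ENat.one_le_iff_ne_zero.mpr h0) (Ne.symm h1')
      exact Order.add_one_le_of_lt this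
    have h3 : G.edist u z ⊓ ((1 : ℕ∞) + 1) = (1 : ℕ∞) + 1 := min_eq_right h2'
    rw [show ((1:ℕ) : ℕ∞) + 1 = (1 : ℕ∞) + 1 by norm_num, h3]
    norm_num

lemma trunc1_ne_zero (G : SimpleGraph V) {u z : V} (h : u ≠ z) :
    truncDist G 1 u z ≠ 0 := by
  rw [trunc1_eq]
  split_ifs with h1 h2 <;> simp_all

lemma key (G H : SimpleGraph V) (x y : V)
    (hGH : ∀ u v : V, s(u, v) ≠ s(x, y) → (G.Adj u v ↔ H.Adj u v))
    (S : Set V) (hS : IsAdjResolvingSet G S) :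
    IsAdjResolvingSet H (S ∪ {x, y}) := by
  have tinv : ∀ u v : V, s(u, v) ≠ s(x, y) → truncDist G 1 u v = truncDist H 1 u v := by
    intro u v h
    rw [trunc1_eq, trunc1_eq, hGH u v h]
  intro a b hab
  by_cases h1 : s(a, b) = s(x, y)
  · -- a ∈ {x,y}: use a itself as witness
    have ha : a = x ∨ a = y := by
      rw [Sym2.eq_iff] at h1
      rcases h1 with ⟨h, _⟩ | ⟨h, _⟩ <;> [left; right] <;> exact h
    refine ⟨a, Or.inr (by rcases ha with h | h <;> simp [h]), ?_⟩
    rw [trunc1_eq H a a]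
    simp only [if_pos rfl]
    exact fun h => trunc1_ne_zero H (Ne.symm hab) h.symm
  · obtain ⟨z, hz, hne⟩ := hS a b hab
    by_cases h2 : s(a, z) = s(x, y)
    · -- a ∈ {x,y}: use a
      have ha : a = x ∨ a = y := by
        rw [Sym2.eq_iff] at h2
        rcases h2 with ⟨h, _⟩ | ⟨h, _⟩ <;> [left; right] <;> exact h
      refine ⟨a, Or.inr (by rcases ha with h | h <;> simp [h]), ?_⟩
      rw [trunc1_eq H a a]
      simp only [if_pos rfl]
      exact fun h => trunc1_ne_zero H (Ne.symm hab) h.symm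
    · by_cases h3 : s(b, z) = s(x, y)
      · have hb : b = x ∨ b = y := by
          rw [Sym2.eq_iff] at h3
          rcases h3 with ⟨h, _⟩ | ⟨h, _⟩ <;> [left; right] <;> exact h
        refine ⟨b, Or.inr (by rcases hb with h | h <;> simp [h]), ?_⟩
        rw [trunc1_eq H b b]
        simp only [if_pos rfl]
        exact trunc1_ne_zero H hab
      · exact ⟨z, Or.inl hz, by rw [← tinv a z h2, ← tinv b z h3]; exact hne⟩

theorem stmt_16 {V : Type*} (G : SimpleGraph V) (x y : V) (he : G.Adj x y) :
    (∀ S : Set V, IsAdjResolvingSet G S →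
      IsAdjResolvingSet (G.deleteEdges {s(x, y)}) (S ∪ {x, y})) ∧
    (∀ R : Set V, IsAdjResolvingSet (G.deleteEdges {s(x, y)}) R →
      IsAdjResolvingSet G (R ∪ {x, y})) := by
  have hGH : ∀ u v : V, s(u, v) ≠ s(x, y) →
      (G.Adj u v ↔ (G.deleteEdges {s(x, y)}).Adj u v) := by
    intro u v h
    simp [SimpleGraph.deleteEdges_adj, h]
  constructor
  · exact fun S hS => key G _ x y hGH S hS
  · exact fun R hR => key _ G x y (fun u v h => (hGH u v h).symm) R hR
end
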